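/- Assume Graf's addition theorem e^{iℓ₁γ₁}J_{ℓ₁}(λρ₁) = Σ_{m∈ℤ} J_m(λρ₂) J_{m+ℓ₁}(λρ₃) e^{imγ₃} holds, where γ₁, γ₃ are the triangle angles as functions of γ₃ with ρ₁ = ρ₁(γ₃) = √(ρ₂²+ρ₃²-2ρ₂ρ₃cos γ₃). Then for all integers ℓ₁, ℓ₂ and λ > 0: ∫₀^π cos(ℓ₁γ₁ - ℓ₂γ₃) J_{ℓ₁}(λρ₁(γ₃)) dγ₃ = π J_{ℓ₂}(λρ₂) J_{ℓ₁+ℓ₂}(λρ₃). -/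

import Mathlib

open Real MeasureTheory Filter Topology Complex

/-- Bessel function of the first kind of integer order, via the standard
integral representation `J_n(x) = (1/π) ∫₀^π cos (n θ - x sin θ) dθ`. -/
noncomputable def besselJ (n : ℤ) (x : ℝ) : ℝ :=
  (1 / Real.pi) * ∫ θ in (0:ℝ)..Real.pi, Real.cos (n * θ - x * Real.sin θ)

/-!
Multiplying Graf's series by `exp (-i ℓ₂ γ₃)` and taking real parts writes the integrand as the
cosine series `∑ₘ Jₘ(λρ₂) J_{m+ℓ₁}(λρ₃) cos ((m - ℓ₂) γ₃)`, whose coefficients are absolutely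
summable because `|exp (i m γ₃)| = 1`. Integrating term by term over `[0, π]` (dominated
convergence) kills every term except `m = ℓ₂`, which contributes `π J_{ℓ₂}(λρ₂) J_{ℓ₁+ℓ₂}(λρ₃)`.
-/

theorem integral_cos_intCast_mul (k : ℤ) :
    ∫ x in (0:ℝ)..π, Real.cos (k * x) = if k = 0 then π else 0 := by
  split_ifs with hk
  · simp [hk]
  · have hk' : (k : ℝ) ≠ 0 := Int.cast_ne_zero.mpr hk
    rw [intervalIntegral.integral_comp_mul_left Real.cos hk', integral_cos,
      Real.sin_int_mul_pi]
    simp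

theorem summable_abs_of_summable_mul_exp {a : ℤ → ℝ} {γ : ℝ}
    (h : Summable fun m : ℤ => (a m : ℂ) * exp (I * m * γ)) :
    Summable fun m => |a m| :=
  (summable_norm_iff.mpr h).congr fun m => by
    simp [Complex.norm_exp, Complex.mul_re]

theorem hasSum_mul_cos_of_hasSum_mul_exp {a : ℤ → ℝ} {c θ γ : ℝ} (k n : ℤ)
    (h : HasSum (fun m : ℤ => (a m : ℂ) * exp (I * m * γ)) (exp (I * k * θ) * c)) :
    HasSum (fun m => a m * Real.cos ((m - n : ℤ) * γ)) (Real.cos (k * θ - n * γ) * c) := by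
  have key := (h.mul_right (exp (-(I * n * γ)))).mapL reCLM
  convert key using 1
  · funext m
    rw [reCLM_apply, mul_assoc, ← Complex.exp_add,
      show I * m * γ + -(I * n * γ) = (((m - n : ℤ) * γ : ℝ) : ℂ) * I by push_cast; ring,
      re_ofReal_mul, exp_ofReal_mul_I_re]
  · rw [reCLM_apply, mul_right_comm, ← Complex.exp_add,
      show I * k * θ + -(I * n * γ) = ((k * θ - n * γ : ℝ) : ℂ) * I by push_cast; ring,
      re_mul_ofReal, exp_ofReal_mul_I_re]

theorem integral_eq_pi_mul_of_hasSum_mul_cos {a : ℤ → ℝ} {f : ℝ → ℝ} (n : ℤ)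
    (ha : Summable fun m => |a m|)
    (hf : ∀ x ∈ Set.Ioo 0 π, HasSum (fun m => a m * Real.cos ((m - n : ℤ) * x)) (f x)) :
    ∫ x in (0:ℝ)..π, f x = π * a n := by
  have termwise : HasSum (fun m => ∫ x in (0:ℝ)..π, a m * Real.cos ((m - n : ℤ) * x))
      (∫ x in (0:ℝ)..π, f x) := by
    refine intervalIntegral.hasSum_integral_of_dominated_convergence (fun m _ => |a m|)
      (fun m => by fun_prop) (fun m => ?_) (ae_of_all _ fun _ _ => ha) intervalIntegrable_const ?_
    · refine ae_of_all _ fun x _ => ?_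
      simpa [abs_mul] using mul_le_of_le_one_right (abs_nonneg (a m)) (abs_cos_le_one _)
    · filter_upwards [volume.ae_ne π] with x hxπ hx
      rw [Set.uIoc_of_le pi_pos.le] at hx
      exact hf x ⟨hx.1, hx.2.lt_of_ne hxπ⟩
  have only_n : ∀ m ≠ n, ∫ x in (0:ℝ)..π, a m * Real.cos ((m - n : ℤ) * x) = 0 := by
    intro m hm
    rw [intervalIntegral.integral_const_mul, integral_cos_intCast_mul,
      if_neg (sub_ne_zero.mpr hm), mul_zero]
  rw [termwise.unique (hasSum_single n only_n), intervalIntegral.integral_const_mul,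
    integral_cos_intCast_mul, sub_self, if_pos rfl, mul_comm]

theorem stmt_6_general (ρ₂ ρ₃ lam : ℝ) (ρ₁ γ₁ : ℝ → ℝ) (ℓ₁ ℓ₂ : ℤ)
    (hGraf : ∀ γ₃ ∈ Set.Ioo (0:ℝ) Real.pi, ∀ ℓ : ℤ,
      HasSum
        (fun m : ℤ =>
          (besselJ m (lam * ρ₂) : ℂ) * (besselJ (m + ℓ) (lam * ρ₃) : ℂ) *
            Complex.exp (Complex.I * m * γ₃))
        (Complex.exp (Complex.I * ℓ * γ₁ γ₃) * (besselJ ℓ (lam * ρ₁ γ₃) : ℂ))) :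
    (∫ γ₃ in (0:ℝ)..Real.pi,
        Real.cos (ℓ₁ * γ₁ γ₃ - ℓ₂ * γ₃) * besselJ ℓ₁ (lam * ρ₁ γ₃)) =
      Real.pi * besselJ ℓ₂ (lam * ρ₂) * besselJ (ℓ₁ + ℓ₂) (lam * ρ₃) := by
  set a : ℤ → ℝ := fun m => besselJ m (lam * ρ₂) * besselJ (m + ℓ₁) (lam * ρ₃)
  have graf : ∀ γ ∈ Set.Ioo 0 π, HasSum (fun m : ℤ => (a m : ℂ) * exp (I * m * γ))
      (exp (I * ℓ₁ * γ₁ γ) * (besselJ ℓ₁ (lam * ρ₁ γ) : ℂ)) := fun γ hγ => by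
    simpa only [a, ofReal_mul] using hGraf γ hγ ℓ₁
  have hπ2 : π / 2 ∈ Set.Ioo 0 π := ⟨by positivity, by linarith [pi_pos]⟩
  rw [integral_eq_pi_mul_of_hasSum_mul_cos ℓ₂
    (summable_abs_of_summable_mul_exp (graf _ hπ2).summable)
    fun γ hγ => hasSum_mul_cos_of_hasSum_mul_exp ℓ₁ ℓ₂ (graf γ hγ)]
  simp only [a, add_comm ℓ₂ ℓ₁, mul_assoc]

theorem stmt_6 (ρ₂ ρ₃ lam : ℝ) (ρ₁ γ₁ : ℝ → ℝ) (ℓ₁ ℓ₂ : ℤ)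
    (h₂ : 0 < ρ₂) (h₃ : 0 < ρ₃) (hlam : 0 < lam)
    (hρ₁ : ∀ γ₃ ∈ Set.Ioo (0:ℝ) Real.pi,
      ρ₁ γ₃ = Real.sqrt (ρ₂ ^ 2 + ρ₃ ^ 2 - 2 * ρ₂ * ρ₃ * Real.cos γ₃))
    (hγ₁ : ∀ γ₃ ∈ Set.Ioo (0:ℝ) Real.pi,
      γ₁ γ₃ ∈ Set.Ioo (0:ℝ) Real.pi ∧
        Real.cos (γ₁ γ₃) =
          ((ρ₁ γ₃) ^ 2 + ρ₂ ^ 2 - ρ₃ ^ 2) / (2 * ρ₁ γ₃ * ρ₂))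
    (hGraf : ∀ γ₃ ∈ Set.Ioo (0:ℝ) Real.pi, ∀ ℓ : ℤ,
      HasSum
        (fun m : ℤ =>
          (besselJ m (lam * ρ₂) : ℂ) * (besselJ (m + ℓ) (lam * ρ₃) : ℂ) *
            Complex.exp (Complex.I * m * γ₃))
        (Complex.exp (Complex.I * ℓ * γ₁ γ₃) * (besselJ ℓ (lam * ρ₁ γ₃) : ℂ))) :
    (∫ γ₃ in (0:ℝ)..Real.pi,
        Real.cos (ℓ₁ * γ₁ γ₃ - ℓ₂ * γ₃) * besselJ ℓ₁ (lam * ρ₁ γ₃)) =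
      Real.pi * besselJ ℓ₂ (lam * ρ₂) * besselJ (ℓ₁ + ℓ₂) (lam * ρ₃) :=
  stmt_6_general ρ₂ ρ₃ lam ρ₁ γ₁ ℓ₁ ℓ₂ hGraf
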